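/- Let ρ_q = (q, q−1, ..., 1) be the staircase partition. For any partition J contained in ρ_q, the binomial determinant d_{ρ_q, J} = det( C(ρ_q(a) + q − a, j_b + q − b) )_{1 ≤ a,b ≤ q} is strictly positive. -/

import Mathlib

/-!
Minors `det (C(i a, j b))` of Pascal's matrix with `i`, `j` strictly increasing and `j ≤ i`
are positive (Lindström–Gessel–Viennot). Induct on `∑ i`: if `i 0 = 0`, the first row is a unit
vector; otherwise Pascal's rule `C(n + 1, k) = C(n, k) + C(n, k - 1)`, applied in every column,
writes the determinant as a sum of binomial determinants for `i - 1`. Each summand is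
nonnegative (it vanishes through a zero block or two equal columns unless its column indices are
again increasing and dominated), and the one with column indices `min (j b) (i b - 1)` is
positive. Reversing rows and columns turns the staircase matrix into `(C(2a + 1, J (q-1-b) + b))`.
-/

open Finset Matrix

theorem Matrix.det_eq_zero_of_zero_block {R : Type*} [CommRing R] {p : ℕ}
    (M : Matrix (Fin p) (Fin p) R) (t : Fin p) (h : ∀ a b, a ≤ t → t ≤ b → M a b = 0) :
    M.det = 0 := by
  rw [det_apply]
  refine sum_eq_zero fun σ _ => ?_
  obtain ⟨c, htc, hσc⟩ : ∃ c, t ≤ c ∧ σ c ≤ t := by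
    by_contra! hσ
    have hcard := card_le_card_of_injOn σ (s := Ici t) (t := Ioi t)
      (fun c hc => mem_Ioi.2 (hσ c (mem_Ici.1 hc))) σ.injective.injOn
    rw [Fin.card_Ici, Fin.card_Ioi] at hcard
    omega
  rw [prod_eq_zero (f := fun i => M (σ i) i) (mem_univ c) (h _ _ hσc htc), smul_zero]

section Binomial

variable {p : ℕ}

def binomialMatrix (i j : Fin p → ℕ) : Matrix (Fin p) (Fin p) ℤ :=
  of fun a b => ((i a).choose (j b) : ℤ)

theorem det_binomialMatrix_eq_zero_of_lt {i j : Fin p → ℕ} (hi : Monotone i) (hj : Monotone j)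
    {t : Fin p} (ht : i t < j t) : (binomialMatrix i j).det = 0 :=
  det_eq_zero_of_zero_block _ t fun a b hat htb =>
    by simp [binomialMatrix, Nat.choose_eq_zero_of_lt ((hi hat).trans_lt (ht.trans_le (hj htb)))]

theorem det_binomialMatrix_nonneg_of_pos {i : Fin p → ℕ} (hi : Monotone i)
    (hpos : ∀ j, StrictMono j → (∀ t, j t ≤ i t) → 0 < (binomialMatrix i j).det)
    {j : Fin p → ℕ} (hj : Monotone j) : 0 ≤ (binomialMatrix i j).det := by
  by_cases hinj : Function.Injective j
  · by_cases hji : ∀ t, j t ≤ i t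
    · exact (hpos j (hj.strictMono_of_injective hinj) hji).le
    · push Not at hji
      obtain ⟨t, ht⟩ := hji
      exact (det_binomialMatrix_eq_zero_of_lt hi hj ht).ge
  · obtain ⟨b₁, b₂, hj₁₂, hne⟩ := Function.not_injective_iff.1 hinj
    exact (det_zero_of_column_eq hne fun a => by simp [binomialMatrix, hj₁₂]).ge

theorem det_binomialMatrix_of_zero {i j : Fin (p + 1) → ℕ} (hi : i 0 = 0) (hj : StrictMono j)
    (hj0 : j 0 = 0) :
    (binomialMatrix i j).det = (binomialMatrix (i ∘ Fin.succ) (j ∘ Fin.succ)).det := by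
  have hj_pos (b : Fin p) : 0 < j b.succ := hj0 ▸ hj (Fin.succ_pos b)
  rw [det_succ_row_zero, Fin.sum_univ_succ,
    sum_eq_zero fun b _ => by simp [binomialMatrix, hi, Nat.choose_eq_zero_iff, hj_pos b]]
  simp [binomialMatrix, hi, hj0]
  rfl

/-- Pascal's rule in every column; a column with `j b = 0` admits only the first summand. -/
theorem det_binomialMatrix_succ (i j : Fin p → ℕ) :
    (binomialMatrix (i · + 1) j).det =
      ∑ S ∈ univ.filter (fun S : Finset (Fin p) => ∀ b ∉ S, j b ≠ 0),
        (binomialMatrix i fun b => if b ∈ S then j b else j b - 1).det := by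
  set u : Fin p → Fin p → ℤ := fun b a => ((i a).choose (j b) : ℤ)
  set v : Fin p → Fin p → ℤ := fun b a => if j b = 0 then 0 else ((i a).choose (j b - 1) : ℤ)
  have hsplit : (binomialMatrix (i · + 1) j)ᵀ = u + v := by
    ext b a
    rcases h : j b with _ | k
    · simp [binomialMatrix, u, v, h]
    · simp [binomialMatrix, u, v, h, Nat.choose_succ_succ', add_comm]
  rw [← det_transpose, hsplit, sum_filter]
  change detRowAlternating (u + v) = _
  rw [AlternatingMap.map_add_univ]
  refine sum_congr rfl fun S _ => ?_
  split_ifs with hS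
  · rw [← det_transpose]
    congr 1
    ext b a
    by_cases hb : b ∈ S
    · simp [binomialMatrix, u, hb]
    · simp [binomialMatrix, v, hb, hS b hb]
  · push Not at hS
    obtain ⟨b, hb, hjb⟩ := hS
    exact det_eq_zero_of_row_eq_zero b fun a => by simp [piecewise_eq_of_notMem _ _ _ hb, v, hjb]

theorem det_binomialMatrix_succ_pos {i j : Fin p → ℕ} (hi : StrictMono i) (hj : StrictMono j)
    (hji : ∀ t, j t ≤ i t + 1)
    (hpos : ∀ j, StrictMono j → (∀ t, j t ≤ i t) → 0 < (binomialMatrix i j).det) :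
    0 < (binomialMatrix (i · + 1) j).det := by
  rw [det_binomialMatrix_succ]
  set S₀ := univ.filter fun b => j b ≤ i b
  have hS₀ : (fun b => if b ∈ S₀ then j b else j b - 1) = fun b => min (j b) (i b) := by
    ext b
    have := hji b
    simp only [S₀, mem_filter, mem_univ, true_and]
    split_ifs <;> omega
  refine sum_pos' (fun S _ => det_binomialMatrix_nonneg_of_pos hi.monotone hpos ?_) ⟨S₀, ?_, ?_⟩
  · intro b₁ b₂ hb
    rcases hb.eq_or_lt with rfl | hb
    · rfl
    · have := hj hb
      dsimp only
      split_ifs <;> omega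
  · simp only [S₀, mem_filter, mem_univ, true_and]
    intro b hb
    omega
  · rw [hS₀]
    exact hpos _ (fun b₁ b₂ hb => lt_min ((min_le_left _ _).trans_lt (hj hb))
      ((min_le_right _ _).trans_lt (hi hb))) fun t => min_le_right _ _

theorem det_binomialMatrix_pos {i j : Fin p → ℕ} (hi : StrictMono i) (hj : StrictMono j)
    (hji : ∀ t, j t ≤ i t) : 0 < (binomialMatrix i j).det := by
  induction hn : p + ∑ t, i t using Nat.strong_induction_on generalizing p with
  | _ n ih =>
  rcases p with _ | p
  · simp [binomialMatrix]
  by_cases hi0 : i 0 = 0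
  · have hj0 : j 0 = 0 := by have := hji 0; omega
    rw [det_binomialMatrix_of_zero hi0 hj hj0]
    refine ih _ ?_ (hi.comp Fin.strictMono_succ) (hj.comp Fin.strictMono_succ) (fun t => hji _) rfl
    rw [← hn, Fin.sum_univ_succ, hi0]
    simp
  · obtain ⟨i', rfl⟩ : ∃ i' : Fin (p + 1) → ℕ, i = (i' · + 1) :=
      ⟨fun a => i a - 1, funext fun a => by dsimp only; have := hi.monotone (Fin.zero_le a); omega⟩
    have hi' : StrictMono i' := fun a b hab => Nat.succ_lt_succ_iff.1 (hi hab)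
    refine det_binomialMatrix_succ_pos hi' hj hji fun j hj hji => ih _ ?_ hi' hj hji rfl
    rw [← hn, sum_add_distrib]
    simp

end Binomial

/-- **Positivity of the staircase binomial determinants.**  Let `ρ_q = (q, q−1, …, 1)`
be the staircase partition.  For any partition `J = (j_1 ≥ … ≥ j_q ≥ 0)` contained in
`ρ_q` (i.e. `j_a ≤ q + 1 − a`, in `0`-based indexing `J a ≤ q − a`), the binomial
determinant `d_{ρ_q, J} = det( C(ρ_q(a) + q − a, j_b + q − b) )_{1 ≤ a,b ≤ q}` is
strictly positive.  (In `0`-based indexing `ρ_q(a) + q − a = (q − a) + (q − 1 − a)`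
and `j_b + q − b = J b + (q − 1 − b)`.) -/
theorem staircase_binomial_determinant_pos (q : ℕ) (J : Fin q → ℕ)
    (hJ : Antitone J) (hJρ : ∀ a : Fin q, J a ≤ q - (a : ℕ)) :
    0 < Matrix.det (Matrix.of fun a b : Fin q =>
      (((q - (a : ℕ)) + (q - 1 - (a : ℕ))).choose (J b + (q - 1 - (b : ℕ))) : ℤ)) := by
  have hpos : 0 < (binomialMatrix (fun a : Fin q => 2 * a + 1) (fun b => J b.rev + b)).det := by
    refine det_binomialMatrix_pos (fun a b hab => by omega)
      (fun a b hab => ?_) (fun t => ?_)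
    · have := hJ (Fin.rev_le_rev.2 hab.le)
      omega
    · have := hJρ t.rev
      rw [Fin.val_rev] at this
      omega
  rw [← det_submatrix_equiv_self Fin.revPerm]
  convert hpos using 3
  ext a b
  simp only [submatrix_apply, of_apply, Fin.revPerm_apply, binomialMatrix, Fin.val_rev]
  congr 2 <;> omega
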